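/- Let N ≥ 2 and α ≥ 0, and let u(λ_2) be the unit eigenvector of H_{αU}(P_N) for its second smallest eigenvalue λ_2, chosen with u_1(λ_2) > 0 and extended by u_0(λ_2) = u_1(λ_2), u_{N+1}(λ_2) = u_N(λ_2). Then the u(λ_2)-line has a node at or left of (N+1)/2: there exist an index m ∈ {1,…,N} and a real number x with m ≤ x ≤ m+1 and x ≤ (N+1)/2 such that (m+1−x)u_m(λ_2) + (x−m)u_{m+1}(λ_2) = 0. -/

import Mathlib

/-- The path Schrödinger operator `H_W(P_N)`; vertex `i : Fin N` has label `i + 1`. -/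
noncomputable def pathH (N : ℕ) (W : ℕ → ℝ) : Matrix (Fin N) (Fin N) ℝ :=
  Matrix.of fun i j =>
    if i = j then
      (if (i : ℕ) = 0 ∨ (i : ℕ) = N - 1 then (1 : ℝ) else 2) + W ((i : ℕ) + 1)
    else if (i : ℕ) + 1 = (j : ℕ) ∨ (j : ℕ) + 1 = (i : ℕ) then -1 else 0

/-- `μ` is an eigenvalue of the real matrix `A`. -/
def IsEigen {n : ℕ} (A : Matrix (Fin n) (Fin n) ℝ) (μ : ℝ) : Prop :=
  ∃ v : Fin n → ℝ, v ≠ 0 ∧ A.mulVec v = μ • v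

/-- `l1 < l2` are the two smallest eigenvalues of `A`. -/
def TwoSmallest {n : ℕ} (A : Matrix (Fin n) (Fin n) ℝ) (l1 l2 : ℝ) : Prop :=
  IsEigen A l1 ∧ IsEigen A l2 ∧ l1 < l2 ∧
    ∀ μ, IsEigen A μ → l1 ≤ μ ∧ (μ ≠ l1 → l2 ≤ μ)

/-!
The eigenvalue equation is the recurrence `u (j - 1) + u (j + 1) = C j * u j` on `1, …, N` with
Neumann ends `u 0 = u 1`, `u (N + 1) = u N` and the nondecreasing potential
`C j = 2 + α (j - 1) - λ₂`. A maximal-ratio argument shows that a solution positive on all of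
`1, …, N` belongs to the least eigenvalue, so `u` changes sign; let its first node lie in
`[m, m + 1]`. The reflection `j ↦ u (N + 1 - j)` solves the recurrence with potential
`C (N + 1 - j)`, which dominates `C` on the left half. By the discrete Wronskian identity
(Sturm comparison) `u` vanishes no later than the reflection does, while the first node of the
reflection is the mirror image of the last node of `u`. So a first node right of the centre
`(N + 1) / 2` would put a node of the reflection left of it, hence before the first node of `u`.
-/

structure IsNeumannSolution (N : ℕ) (C : ℕ → ℝ) (u : ℕ → ℝ) : Prop where
  left_eq : u 0 = u 1
  right_eq : u (N + 1) = u N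
  recurrence : ∀ j, 1 ≤ j → j ≤ N → u (j - 1) + u (j + 1) = C j * u j

namespace IsNeumannSolution

variable {N : ℕ} {C : ℕ → ℝ} {u : ℕ → ℝ}

theorem const_mul (hu : IsNeumannSolution N C u) (c : ℝ) :
    IsNeumannSolution N C fun j => c * u j where
  left_eq := by rw [hu.left_eq]
  right_eq := by rw [hu.right_eq]
  recurrence j hj hjN := by linear_combination c * hu.recurrence j hj hjN

theorem reflect (hu : IsNeumannSolution N C u) :
    IsNeumannSolution N (fun j => C (N + 1 - j)) fun j => u (N + 1 - j) where
  left_eq := by simpa using hu.right_eq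
  right_eq := by simpa using hu.left_eq
  recurrence j hj hjN := by
    have h := hu.recurrence (N + 1 - j) (by omega) (by omega)
    rw [show N + 1 - j - 1 = N + 1 - (j + 1) by omega,
      show N + 1 - j + 1 = N + 1 - (j - 1) by omega] at h
    linarith

theorem eq_zero_of_one_eq_zero (hu : IsNeumannSolution N C u) (h1 : u 1 = 0) :
    ∀ j ≤ N + 1, u j = 0 := by
  suffices ∀ j ≤ N, u j = 0 ∧ u (j + 1) = 0 from fun j hj =>
    if hjN : j ≤ N then (this j hjN).1
    else by simpa [show j = N + 1 by omega] using (this N le_rfl).2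
  intro j hj
  induction j with
  | zero => exact ⟨hu.left_eq.trans h1, h1⟩
  | succ k ih =>
    obtain ⟨hk, hk1⟩ := ih (by omega)
    have h := hu.recurrence (k + 1) (by omega) hj
    simp only [Nat.add_sub_cancel, hk, hk1, mul_zero, zero_add] at h
    exact ⟨hk1, h⟩

theorem right_ne_zero (hu : IsNeumannSolution N C u) (h1 : u 1 ≠ 0) : u N ≠ 0 := fun hN =>
  h1 <| by simpa using hu.reflect.eq_zero_of_one_eq_zero (by simpa using hN) N N.le_succ

theorem le_of_forall_pos {μ ν : ℝ} {w : ℕ → ℝ} (hu : IsNeumannSolution N (fun j => C j - μ) u)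
    (hw : IsNeumannSolution N (fun j => C j - ν) w) (hupos : ∀ j, 1 ≤ j → j ≤ N → 0 < u j)
    (hwpos : ∃ j, 1 ≤ j ∧ j ≤ N ∧ 0 < w j) : μ ≤ ν := by
  obtain ⟨j₁, hj₁, hj₁N, hwj₁⟩ := hwpos
  obtain ⟨j₀, hj₀, hmax⟩ := (Finset.Icc 1 N).exists_max_image (fun j => w j / u j)
    ⟨j₁, Finset.mem_Icc.2 ⟨hj₁, hj₁N⟩⟩
  rw [Finset.mem_Icc] at hj₀
  set c := w j₀ / u j₀
  have hle : ∀ j, 1 ≤ j → j ≤ N → w j ≤ c * u j := fun j h1 h2 =>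
    (div_le_iff₀ (hupos j h1 h2)).1 (hmax j (Finset.mem_Icc.2 ⟨h1, h2⟩))
  have hle' : ∀ j, j ≤ N + 1 → w j ≤ c * u j := by
    intro j hj
    rcases Nat.eq_zero_or_pos j with rfl | hj0
    · rw [hu.left_eq, hw.left_eq]; exact hle 1 le_rfl (by omega)
    · rcases eq_or_lt_of_le hj with rfl | hjN
      · rw [hu.right_eq, hw.right_eq]; exact hle N (by omega) le_rfl
      · exact hle j hj0 (by omega)
  have hc : 0 < c := (div_pos hwj₁ (hupos j₁ hj₁ hj₁N)).trans_le
    (hmax j₁ (Finset.mem_Icc.2 ⟨hj₁, hj₁N⟩))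
  have huj₀ := hupos j₀ hj₀.1 hj₀.2
  have hwj₀ : w j₀ = c * u j₀ := (div_mul_cancel₀ _ huj₀.ne').symm
  have key : (C j₀ - ν) * (c * u j₀) ≤ (C j₀ - μ) * (c * u j₀) := by
    calc (C j₀ - ν) * (c * u j₀) = w (j₀ - 1) + w (j₀ + 1) := by
          rw [← hwj₀, hw.recurrence j₀ hj₀.1 hj₀.2]
      _ ≤ c * (u (j₀ - 1) + u (j₀ + 1)) := by
          linarith [hle' (j₀ - 1) (by omega), hle' (j₀ + 1) (by omega)]
      _ = (C j₀ - μ) * (c * u j₀) := by rw [hu.recurrence j₀ hj₀.1 hj₀.2]; ring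
  nlinarith [mul_pos hc huj₀]

theorem le_of_forall_pos_of_ne_zero {μ ν : ℝ} {w : ℕ → ℝ}
    (hu : IsNeumannSolution N (fun j => C j - μ) u) (hw : IsNeumannSolution N (fun j => C j - ν) w)
    (hupos : ∀ j, 1 ≤ j → j ≤ N → 0 < u j) (hw0 : ∃ j, 1 ≤ j ∧ j ≤ N ∧ w j ≠ 0) : μ ≤ ν := by
  obtain ⟨j, hj, hjN, hwj⟩ := hw0
  rcases hwj.lt_or_gt with hneg | hpos
  · exact hu.le_of_forall_pos (hw.const_mul (-1)) hupos ⟨j, hj, hjN, by linarith⟩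
  · exact hu.le_of_forall_pos hw hupos ⟨j, hj, hjN, hpos⟩

end IsNeumannSolution

theorem wronskian_eq_sum {C D u w : ℕ → ℝ} {n : ℕ} (hu0 : u 0 = u 1) (hw0 : w 0 = w 1)
    (hu : ∀ j, 1 ≤ j → j ≤ n → u (j - 1) + u (j + 1) = C j * u j)
    (hw : ∀ j, 1 ≤ j → j ≤ n → w (j - 1) + w (j + 1) = D j * w j) :
    u (n + 1) * w n - u n * w (n + 1) = ∑ j ∈ Finset.Icc 1 n, (C j - D j) * u j * w j := by
  induction n with
  | zero => simp [hu0, hw0, mul_comm]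
  | succ n ih =>
    rw [Finset.sum_Icc_succ_top (by omega), ← ih (fun j h1 h2 => hu j h1 (by omega))
      (fun j h1 h2 => hw j h1 (by omega))]
    have hun := hu (n + 1) (by omega) le_rfl
    have hwn := hw (n + 1) (by omega) le_rfl
    simp only [Nat.add_sub_cancel] at hun hwn
    linear_combination w (n + 1) * hun - u (n + 1) * hwn

theorem sturm_comparison {C D u w : ℕ → ℝ} {n : ℕ} (hu0 : u 0 = u 1) (hw0 : w 0 = w 1)
    (hu : ∀ j, 1 ≤ j → j ≤ n → u (j - 1) + u (j + 1) = C j * u j)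
    (hw : ∀ j, 1 ≤ j → j ≤ n → w (j - 1) + w (j + 1) = D j * w j)
    (hCD : ∀ j, 1 ≤ j → j ≤ n → C j ≤ D j) (hupos : ∀ j, 1 ≤ j → j ≤ n → 0 ≤ u j)
    (hwpos : ∀ j, 1 ≤ j → j ≤ n → 0 ≤ w j) : u (n + 1) * w n ≤ u n * w (n + 1) := by
  have hsum : ∑ j ∈ Finset.Icc 1 n, (C j - D j) * u j * w j ≤ 0 := by
    refine Finset.sum_nonpos fun j hj => ?_
    obtain ⟨h1, h2⟩ := Finset.mem_Icc.1 hj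
    exact mul_nonpos_of_nonpos_of_nonneg
      (mul_nonpos_of_nonpos_of_nonneg (by linarith [hCD j h1 h2]) (hupos j h1 h2)) (hwpos j h1 h2)
  linarith [wronskian_eq_sum hu0 hw0 hu hw]

theorem exists_first_nonpos {u : ℕ → ℝ} {n : ℕ} (h1 : 0 < u 1)
    (h : ∃ j, 1 ≤ j ∧ j ≤ n ∧ u j ≤ 0) :
    ∃ m, 1 ≤ m ∧ m < n ∧ (∀ j, 1 ≤ j → j ≤ m → 0 < u j) ∧ u (m + 1) ≤ 0 := by
  classical
  have hex : ∃ j, 1 ≤ j ∧ u j ≤ 0 := h.imp fun j hj => ⟨hj.1, hj.2.2⟩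
  obtain ⟨j, hj, hjn, hj0⟩ := h
  obtain ⟨ht1, ht0⟩ := Nat.find_spec hex
  have ht2 : 2 ≤ Nat.find hex := by
    by_contra! h2
    rw [show Nat.find hex = 1 by omega] at ht0
    linarith
  have htn : Nat.find hex ≤ n := (Nat.find_min' hex ⟨hj, hj0⟩).trans hjn
  refine ⟨Nat.find hex - 1, by omega, by omega, fun i hi him => ?_,
    by rwa [Nat.sub_add_cancel (by omega)]⟩
  by_contra! hui
  exact Nat.find_min hex (show i < Nat.find hex by omega) ⟨hi, hui⟩

-- The factor `u N` makes the reflection `j ↦ u (N + 1 - j)` positive at `1`.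
theorem IsNeumannSolution.exists_reflect_sign_change {N : ℕ} {C u : ℕ → ℝ}
    (hu : IsNeumannSolution N C u) {m : ℕ} (hm : 1 ≤ m) (hmN : m < N)
    (hpos : ∀ j, 1 ≤ j → j ≤ m → 0 < u j) (hnp : u (m + 1) ≤ 0) :
    ∃ b, 1 ≤ b ∧ b ≤ N - m ∧ (∀ j, 1 ≤ j → j ≤ b → 0 < u N * u (N + 1 - j)) ∧
      u N * u (N - b) ≤ 0 := by
  have huN : u N ≠ 0 := hu.right_ne_zero (hpos 1 le_rfl hm).ne'
  have hsign : ∃ j, 1 ≤ j ∧ j ≤ N - m + 1 ∧ u N * u (N + 1 - j) ≤ 0 := by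
    rcases huN.lt_or_gt with hneg | hpos'
    · refine ⟨N - m + 1, by omega, le_rfl, ?_⟩
      rw [show N + 1 - (N - m + 1) = m by omega]
      exact mul_nonpos_of_nonpos_of_nonneg hneg.le (hpos m hm le_rfl).le
    · refine ⟨N - m, by omega, by omega, ?_⟩
      rw [show N + 1 - (N - m) = m + 1 by omega]
      exact mul_nonpos_of_nonneg_of_nonpos hpos'.le hnp
  obtain ⟨b, hb, hbm, hwpos, hwb⟩ :=
    exists_first_nonpos (u := fun j => u N * u (N + 1 - j)) (by simpa using mul_self_pos.2 huN)
      hsign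
  exact ⟨b, hb, by omega, hwpos, by simpa [show N + 1 - (b + 1) = N - b by omega] using hwb⟩

theorem IsNeumannSolution.first_node_le_center {N : ℕ} {C u : ℕ → ℝ} (hC : Monotone C)
    (hu : IsNeumannSolution N C u) {m : ℕ} (hm : 1 ≤ m) (hmN : m < N)
    (hpos : ∀ j, 1 ≤ j → j ≤ m → 0 < u j) (hnp : u (m + 1) ≤ 0) :
    (m : ℝ) + u m / (u m - u (m + 1)) ≤ (N + 1) / 2 := by
  have hum := hpos m hm le_rfl
  have hd : 0 < u m - u (m + 1) := by linarith
  have hr1 : u m / (u m - u (m + 1)) ≤ 1 := (div_le_one hd).2 (by linarith)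
  by_contra! hx
  have hNm : N ≤ 2 * m := by
    have : (N : ℝ) < 2 * m + 1 := by linarith
    exact_mod_cast Nat.lt_succ_iff.1 (by exact_mod_cast this)
  obtain ⟨b, hb, hbm, hwpos, hwb⟩ := hu.exists_reflect_sign_change hm hmN hpos hnp
  have hw := hu.reflect.const_mul (u N)
  have hcmp := sturm_comparison hu.left_eq hw.left_eq
    (fun j h1 h2 => hu.recurrence j h1 (by omega)) (fun j h1 h2 => hw.recurrence j h1 (by omega))
    (fun j _ h2 => hC (by omega)) (fun j h1 h2 => (hpos j h1 (by omega)).le)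
    (fun j h1 h2 => (hwpos j h1 h2).le)
  simp only [show N + 1 - (b + 1) = N - b by omega] at hcmp
  have hwb' := hwpos b hb le_rfl
  have hub : u (b + 1) ≤ 0 := by
    have := mul_nonpos_of_nonneg_of_nonpos (hpos b hb (by omega)).le hwb
    by_contra! h
    nlinarith
  obtain rfl : m = b := by
    by_contra hne
    linarith [hpos (b + 1) (by omega) (by omega)]
  obtain rfl : N = 2 * m := by omega
  have hsum : 0 < u m + u (m + 1) := by
    have : (1 : ℝ) / 2 < u m / (u m - u (m + 1)) := by push_cast at hx; linarith
    rw [lt_div_iff₀ hd] at this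
    linarith
  -- On `[m, m + 1]` the comparison reads `u N * (u (m + 1) ^ 2 - u m ^ 2) ≤ 0` with `u N < 0`,
  -- whereas a node right of `m + 1 / 2` means `|u (m + 1)| < u m`.
  simp only [show 2 * m + 1 - m = m + 1 by omega, show 2 * m - m = m by omega] at hcmp hwb'
  have hN_neg : u (2 * m) < 0 := by
    by_contra! h
    linarith [mul_nonpos_of_nonneg_of_nonpos h hnp]
  have hsq : u m * u m ≤ u (m + 1) * u (m + 1) := by nlinarith
  nlinarith

theorem pathH_mulVec_apply {N : ℕ} (hN : 2 ≤ N) (W : ℕ → ℝ) {v : ℕ → ℝ}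
    (hv0 : v 0 = v 1) (hvN : v (N + 1) = v N) (i : Fin N) :
    (pathH N W).mulVec (fun j : Fin N => v (j + 1)) i
      = (2 + W (i + 1)) * v (i + 1) - v i - v (i + 2) := by
  obtain ⟨i, hi⟩ := i
  set d : ℝ := (if i = 0 ∨ i = N - 1 then 1 else 2) + W (i + 1)
  have hterm (n : ℕ) :
      (if i = n then d else if i + 1 = n ∨ n + 1 = i then -1 else 0) * v (n + 1)
      = (if n = i then d * v (i + 1) else 0)
        + (if n = i + 1 then -v (i + 2) else 0) + (if n + 1 = i then -v i else 0) := by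
    split_ifs <;> first | omega | (subst_vars; ring)
  simp only [Matrix.mulVec, dotProduct, pathH, Matrix.of_apply, Fin.ext_iff]
  rw [Fin.sum_univ_eq_sum_range (fun n => (if i = n then d
        else if i + 1 = n ∨ n + 1 = i then -1 else 0) * v (n + 1))]
  simp only [hterm, Finset.sum_add_distrib, Finset.sum_ite_eq', Finset.mem_range, if_pos hi]
  rcases i with _ | k
  · simp [d, hv0, show 1 < N by omega]
    ring
  simp only [Nat.add_right_cancel_iff, Finset.sum_ite_eq', Finset.mem_range,
    if_pos (show k < N by omega)]
  by_cases hk : k + 1 = N - 1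
  · obtain rfl : N = k + 2 := by omega
    simp [d, hvN]
    ring
  · simp [d, hk, show k + 1 + 1 < N by omega]
    ring

theorem isNeumannSolution_of_mulVec_eq {N : ℕ} (hN : 2 ≤ N) {W : ℕ → ℝ} {μ : ℝ} {v : ℕ → ℝ}
    (hv0 : v 0 = v 1) (hvN : v (N + 1) = v N)
    (h : (pathH N W).mulVec (fun j : Fin N => v (j + 1)) = μ • fun j : Fin N => v (j + 1)) :
    IsNeumannSolution N (fun j => 2 + W j - μ) v := by
  refine ⟨hv0, hvN, fun j hj hjN => ?_⟩
  have hrow := congrFun h ⟨j - 1, by omega⟩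
  rw [pathH_mulVec_apply hN W hv0 hvN] at hrow
  obtain ⟨k, rfl⟩ : ∃ k, j = k + 1 := ⟨j - 1, by omega⟩
  simp only [Nat.add_sub_cancel, Pi.smul_apply, smul_eq_mul] at hrow ⊢
  linarith

-- `j - 1` truncates at `0` and the `min` clamps at `N - 1`: the values at `0` and `N + 1`
-- repeat those at `1` and `N`.
def neumannExt {N : ℕ} (hN : 0 < N) (g : Fin N → ℝ) (j : ℕ) : ℝ :=
  g ⟨min (j - 1) (N - 1), by omega⟩

theorem isNeumannSolution_neumannExt {N : ℕ} (hN : 2 ≤ N) {W : ℕ → ℝ} {μ : ℝ} {g : Fin N → ℝ}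
    (hg : (pathH N W).mulVec g = μ • g) :
    IsNeumannSolution N (fun j => 2 + W j - μ) (neumannExt (by omega) g) := by
  have hsucc : (fun i : Fin N => neumannExt (by omega) g (i + 1)) = g := by
    funext i
    simp [neumannExt, Nat.le_sub_one_of_lt i.isLt]
  refine isNeumannSolution_of_mulVec_eq hN ?_ ?_ (by rwa [hsucc])
  · simp [neumannExt]
  · simp [neumannExt]

theorem exists_neumannExt_ne_zero {N : ℕ} (hN : 0 < N) {g : Fin N → ℝ} (hg : g ≠ 0) :
    ∃ j, 1 ≤ j ∧ j ≤ N ∧ neumannExt hN g j ≠ 0 := by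
  obtain ⟨i, hi⟩ := Function.ne_iff.1 hg
  exact ⟨i + 1, by omega, i.isLt, by simpa [neumannExt, Nat.le_sub_one_of_lt i.isLt] using hi⟩

theorem path_node_left_of_center_general (N : ℕ) (hN : 2 ≤ N) (α : ℝ) (hα : 0 ≤ α)
    (l1 l2 : ℝ)
    (h : TwoSmallest (pathH N (fun i => α * ((i : ℝ) - 1))) l1 l2)
    (u : ℕ → ℝ)
    (hue : (pathH N (fun i => α * ((i : ℝ) - 1))).mulVec
        (fun i : Fin N => u ((i : ℕ) + 1)) = l2 • fun i : Fin N => u ((i : ℕ) + 1))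
    (hu1 : 0 < u 1) (hl : u 0 = u 1) (hr : u (N + 1) = u N) :
    ∃ m : ℕ, 1 ≤ m ∧ m ≤ N ∧ ∃ x : ℝ,
      (m : ℝ) ≤ x ∧ x ≤ (m : ℝ) + 1 ∧ x ≤ ((N : ℝ) + 1) / 2 ∧
      ((m : ℝ) + 1 - x) * u m + (x - (m : ℝ)) * u (m + 1) = 0 := by
  obtain ⟨⟨g, hg0, hg⟩, -, hl12, -⟩ := h
  have hu := isNeumannSolution_of_mulVec_eq hN hl hr hue
  have hsign : ∃ j, 1 ≤ j ∧ j ≤ N ∧ u j ≤ 0 := by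
    by_contra! hpos
    exact hl12.not_ge <| hu.le_of_forall_pos_of_ne_zero (isNeumannSolution_neumannExt hN hg) hpos
      (exists_neumannExt_ne_zero (by omega) hg0)
  obtain ⟨m, hm, hmN, hpos, hnp⟩ := exists_first_nonpos hu1 hsign
  have hmono : Monotone fun j : ℕ => 2 + α * ((j : ℝ) - 1) - l2 := fun i j hij => by
    dsimp only
    gcongr
  have hum := hpos m hm le_rfl
  have hd : 0 < u m - u (m + 1) := by linarith
  refine ⟨m, hm, hmN.le, m + u m / (u m - u (m + 1)), ?_, ?_,
    hu.first_node_le_center hmono hm hmN hpos hnp, ?_⟩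
  · have := div_nonneg hum.le hd.le
    linarith
  · linarith [(div_le_one hd).2 (by linarith : u m ≤ u m - u (m + 1))]
  · field_simp
    ring

/-- the extended unit eigenvector `u` of `H_{αU}(P_N)` (`α ≥ 0`) for the
second smallest eigenvalue, normalized with `u 1 > 0`, has a node of its `u`-line at or
left of `(N+1)/2`. -/
theorem path_node_left_of_center (N : ℕ) (hN : 2 ≤ N) (α : ℝ) (hα : 0 ≤ α)
    (l1 l2 : ℝ)
    (h : TwoSmallest (pathH N (fun i => α * ((i : ℝ) - 1))) l1 l2)
    (u : ℕ → ℝ)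
    (hue : (pathH N (fun i => α * ((i : ℝ) - 1))).mulVec
        (fun i : Fin N => u ((i : ℕ) + 1)) = l2 • fun i : Fin N => u ((i : ℕ) + 1))
    (hun : ∑ i ∈ Finset.Icc 1 N, u i ^ 2 = 1)
    (hu1 : 0 < u 1) (hl : u 0 = u 1) (hr : u (N + 1) = u N) :
    ∃ m : ℕ, 1 ≤ m ∧ m ≤ N ∧ ∃ x : ℝ,
      (m : ℝ) ≤ x ∧ x ≤ (m : ℝ) + 1 ∧ x ≤ ((N : ℝ) + 1) / 2 ∧
      ((m : ℝ) + 1 - x) * u m + (x - (m : ℝ)) * u (m + 1) = 0 :=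
  path_node_left_of_center_general N hN α hα l1 l2 h u hue hu1 hl hr
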